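/- arXiv:1104.4468 — 6 statements merged into one kernel-verified Lean document; each statement's English description precedes it below -/
import Mathlib

section
/- For matrices A and B of the same dimensions, the operator norm of the Hadamard (entrywise) product A ∘ B is at most γ₂(A) times the operator norm of B, where γ₂(A) is the factorization norm of A. -/
open Matrix
open scoped ComplexOrder

/-- Operator (spectral) norm of a matrix, viewed as a linear map between
Euclidean spaces. -/
noncomputable def opNorm {m n : Type*} [Fintype m] [Fintype n] [DecidableEq n]
    (A : Matrix m n ℂ) : ℝ :=
  ‖LinearMap.toContinuousLinearMap (Matrix.toEuclideanLin A)‖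

/-- The factorization norm γ₂ of a matrix: the infimum over all factorizations
`A x y = ⟨u x, v y⟩` of `max (sup_x ‖u x‖²) (sup_y ‖v y‖²)`. -/
noncomputable def gamma2 {m n : Type*} [Fintype m] [Fintype n]
    (A : Matrix m n ℂ) : ℝ :=
  sInf { c : ℝ | ∃ (d : ℕ) (u : m → EuclideanSpace ℂ (Fin d)) (v : n → EuclideanSpace ℂ (Fin d)),
    (∀ x y, A x y = inner ℂ (u x) (v y)) ∧
    c = max (⨆ x, ‖u x‖ ^ 2) (⨆ y, ‖v y‖ ^ 2) }

/-!
Given a factorization `A x y = ⟪u x, v y⟫ = ∑ i, conj (u x i) * v y i`, the bilinear form of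
`A ⊙ B` splits as `⟪ψ, (A ⊙ B) φ⟫ = ∑ i, ⟪uᵢψ, B (vᵢφ)⟫`, where `uᵢψ = (u x i * ψ x)ₓ`.
Each term is at most `‖B‖ ‖uᵢψ‖ ‖vᵢφ‖`, and Cauchy–Schwarz over `i` together with
`∑ i, ‖uᵢψ‖² = ∑ x, ‖u x‖² |ψ x|² ≤ c ‖ψ‖²` (and likewise for `v`) bounds the form by
`c ‖B‖ ‖ψ‖ ‖φ‖`, where `c` dominates all `‖u x‖²` and `‖v y‖²`. Taking the infimum over
factorizations gives the theorem.
-/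

open scoped InnerProductSpace

section

variable {m n ι : Type*} [Fintype m] [Fintype n] [Fintype ι]

lemma opNorm_le_of_norm_inner_le [DecidableEq n] (M : Matrix m n ℂ) {C : ℝ} (hC : 0 ≤ C)
    (h : ∀ ψ φ, ‖⟪ψ, toEuclideanLin M φ⟫_ℂ‖ ≤ C * (‖ψ‖ * ‖φ‖)) : opNorm M ≤ C :=
  ContinuousLinearMap.opNorm_le_of_re_inner_le hC fun φ ψ hφ hψ => by
    refine (RCLike.re_le_norm _).trans ?_
    simpa [norm_inner_symm, hφ, hψ] using h ψ φ

def coordMul (u : m → EuclideanSpace ℂ ι) (ψ : EuclideanSpace ℂ m) (i : ι) :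
    EuclideanSpace ℂ m :=
  WithLp.toLp 2 fun x => u x i * ψ x

lemma sum_norm_sq_coordMul (u : m → EuclideanSpace ℂ ι) (ψ : EuclideanSpace ℂ m) :
    ∑ i, ‖coordMul u ψ i‖ ^ 2 = ∑ x, ‖u x‖ ^ 2 * ‖ψ x‖ ^ 2 := by
  simp only [EuclideanSpace.norm_sq_eq, coordMul, norm_mul, mul_pow, Finset.sum_mul]
  exact Finset.sum_comm

lemma sum_norm_sq_coordMul_le (u : m → EuclideanSpace ℂ ι) (ψ : EuclideanSpace ℂ m) {c : ℝ}
    (hu : ∀ x, ‖u x‖ ^ 2 ≤ c) : ∑ i, ‖coordMul u ψ i‖ ^ 2 ≤ c * ‖ψ‖ ^ 2 := by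
  rw [sum_norm_sq_coordMul, EuclideanSpace.norm_sq_eq, Finset.mul_sum]
  gcongr with x
  exact hu x

lemma inner_hadamard_toEuclideanLin [DecidableEq n] (A B : Matrix m n ℂ)
    (u : m → EuclideanSpace ℂ ι) (v : n → EuclideanSpace ℂ ι)
    (hA : ∀ x y, A x y = ⟪u x, v y⟫_ℂ) (ψ : EuclideanSpace ℂ m) (φ : EuclideanSpace ℂ n) :
    ⟪ψ, toEuclideanLin (A ⊙ B) φ⟫_ℂ
      = ∑ i, ⟪coordMul u ψ i, toEuclideanLin B (coordMul v φ i)⟫_ℂ := by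
  simp only [EuclideanSpace.inner_eq_star_dotProduct, toLpLin_apply, coordMul, dotProduct,
    mulVec, hadamard_apply, hA, Finset.sum_mul]
  refine (Finset.sum_congr rfl fun x _ => Finset.sum_comm).trans <| Finset.sum_comm.trans <|
    Finset.sum_congr rfl fun i _ => Finset.sum_congr rfl fun x _ => Finset.sum_congr rfl
      fun y _ => ?_
  simp only [Pi.star_apply, star_mul]
  ring

lemma norm_toEuclideanLin_apply_le [DecidableEq n] (M : Matrix m n ℂ) (φ : EuclideanSpace ℂ n) :
    ‖toEuclideanLin M φ‖ ≤ opNorm M * ‖φ‖ :=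
  (LinearMap.toContinuousLinearMap (toEuclideanLin M)).le_opNorm φ

lemma norm_inner_hadamard_le [DecidableEq n] (A B : Matrix m n ℂ)
    (u : m → EuclideanSpace ℂ ι) (v : n → EuclideanSpace ℂ ι)
    (hA : ∀ x y, A x y = ⟪u x, v y⟫_ℂ) {c : ℝ} (hc : 0 ≤ c) (hu : ∀ x, ‖u x‖ ^ 2 ≤ c)
    (hv : ∀ y, ‖v y‖ ^ 2 ≤ c) (ψ : EuclideanSpace ℂ m) (φ : EuclideanSpace ℂ n) :
    ‖⟪ψ, toEuclideanLin (A ⊙ B) φ⟫_ℂ‖ ≤ c * opNorm B * (‖ψ‖ * ‖φ‖) := by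
  have hB : 0 ≤ opNorm B := norm_nonneg _
  set a := coordMul u ψ
  set b := coordMul v φ
  calc ‖⟪ψ, toEuclideanLin (A ⊙ B) φ⟫_ℂ‖
      = ‖∑ i, ⟪a i, toEuclideanLin B (b i)⟫_ℂ‖ := by
        rw [inner_hadamard_toEuclideanLin A B u v hA]
    _ ≤ ∑ i, ‖a i‖ * (opNorm B * ‖b i‖) :=
        norm_sum_le_of_le _ fun i _ => (norm_inner_le_norm _ _).trans <|
          mul_le_mul_of_nonneg_left (norm_toEuclideanLin_apply_le B _) (norm_nonneg _)
    _ = opNorm B * ∑ i, ‖a i‖ * ‖b i‖ := by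
        rw [Finset.mul_sum]
        exact Finset.sum_congr rfl fun i _ => by ring
    _ ≤ opNorm B * (√(∑ i, ‖a i‖ ^ 2) * √(∑ i, ‖b i‖ ^ 2)) := by
        gcongr
        exact Real.sum_mul_le_sqrt_mul_sqrt _ _ _
    _ ≤ opNorm B * (√(c * ‖ψ‖ ^ 2) * √(c * ‖φ‖ ^ 2)) := by
        gcongr
        · exact sum_norm_sq_coordMul_le u ψ hu
        · exact sum_norm_sq_coordMul_le v φ hv
    _ = c * opNorm B * (‖ψ‖ * ‖φ‖) := by
        rw [Real.sqrt_mul hc, Real.sqrt_mul hc, Real.sqrt_sq (norm_nonneg _),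
          Real.sqrt_sq (norm_nonneg _)]
        linear_combination (opNorm B * ‖ψ‖ * ‖φ‖) * Real.mul_self_sqrt hc

lemma opNorm_hadamard_le_of_factorization [DecidableEq n] (A B : Matrix m n ℂ)
    (u : m → EuclideanSpace ℂ ι) (v : n → EuclideanSpace ℂ ι)
    (hA : ∀ x y, A x y = ⟪u x, v y⟫_ℂ) {c : ℝ} (hc : 0 ≤ c) (hu : ∀ x, ‖u x‖ ^ 2 ≤ c)
    (hv : ∀ y, ‖v y‖ ^ 2 ≤ c) :
    opNorm (A ⊙ B) ≤ c * opNorm B :=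
  opNorm_le_of_norm_inner_le _ (mul_nonneg hc (norm_nonneg _))
    (norm_inner_hadamard_le A B u v hA hc hu hv)

end

lemma exists_inner_factorization {m n : Type*} [Fintype n] (A : Matrix m n ℂ) :
    ∃ (d : ℕ) (u : m → EuclideanSpace ℂ (Fin d)) (v : n → EuclideanSpace ℂ (Fin d)),
      ∀ x y, A x y = ⟪u x, v y⟫_ℂ := by
  classical
  let e := Fintype.equivFin n
  refine ⟨Fintype.card n, fun x => WithLp.toLp 2 fun i => star (A x (e.symm i)),
    fun y => EuclideanSpace.single (e y) 1, fun x y => ?_⟩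
  simp [EuclideanSpace.inner_single_right]

lemma le_sInf_mul_of_forall_le_mul {S : Set ℝ} (hS : S.Nonempty) {a b : ℝ} (hb : 0 ≤ b)
    (h : ∀ c ∈ S, a ≤ c * b) : a ≤ sInf S * b := by
  rw [mul_comm, ← smul_eq_mul, ← Real.sInf_smul_of_nonneg hb]
  refine le_csInf hS.smul_set ?_
  rintro _ ⟨c, hc, rfl⟩
  exact (h c hc).trans_eq (mul_comm c b)

theorem opNorm_hadamard_le {m n : Type*} [Fintype m] [Fintype n] [DecidableEq n]
    (A B : Matrix m n ℂ) :
    opNorm (A ⊙ B) ≤ gamma2 A * opNorm B := by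
  refine le_sInf_mul_of_forall_le_mul ?_ (norm_nonneg _) ?_
  · obtain ⟨d, u, v, hA⟩ := exists_inner_factorization A
    exact ⟨_, d, u, v, hA, rfl⟩
  rintro _ ⟨d, u, v, hA, rfl⟩
  exact opNorm_hadamard_le_of_factorization A B u v hA
    (le_max_of_le_left (Real.iSup_nonneg fun _ => sq_nonneg _))
    (fun x => le_max_of_le_left (Finite.le_ciSup (fun x => ‖u x‖ ^ 2) x))
    (fun y => le_max_of_le_right (Finite.le_ciSup (fun y => ‖v y‖ ^ 2) y))
end

section
/- Let p and q be probability distributions for a discrete random variable A taking finitely many strictly positive real values. If the fidelity F(p,q) = Σ_i √(p_i q_i) is at least √δ for some δ ∈ [0,1], then the expectation of A under q satisfies E_q[A] ≥ δ · (E_p[A⁻¹])⁻¹. -/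
/-!
Writing `√(p q) = √(p / a) · √(q a)` and applying Cauchy–Schwarz gives
`δ ≤ F(p, q)² ≤ E_p[A⁻¹] · E_q[A]`.
-/

open Finset

namespace Real

lemma sqrt_mul_eq_sqrt_div_mul_sqrt_mul {x y a : ℝ} (hx : 0 ≤ x) (ha : 0 < a) :
    √(x * y) = √(x / a) * √(y * a) := by
  rw [← sqrt_mul (div_nonneg hx ha.le)]
  field_simp

lemma sum_sqrt_mul_le_sqrt_sum_div_mul_sqrt_sum_mul {ι : Type*} (s : Finset ι)
    {a x y : ι → ℝ} (ha : ∀ i, 0 < a i) (hx : ∀ i, 0 ≤ x i) (hy : ∀ i, 0 ≤ y i) :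
    ∑ i ∈ s, √(x i * y i) ≤ √(∑ i ∈ s, x i / a i) * √(∑ i ∈ s, y i * a i) := by
  rw [sum_congr rfl fun i _ => sqrt_mul_eq_sqrt_div_mul_sqrt_mul (y := y i) (hx i) (ha i)]
  exact sum_sqrt_mul_sqrt_le s (fun i => div_nonneg (hx i) (ha i).le)
    (fun i => mul_nonneg (hy i) (ha i).le)

end Real

theorem expectation_fidelity_general {ι : Type*} [Fintype ι] (a : ι → ℝ) (ha : ∀ i, 0 < a i)
    (p q : ι → ℝ) (hp0 : ∀ i, 0 ≤ p i) (hq0 : ∀ i, 0 ≤ q i)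
    (δ : ℝ)
    (hF : Real.sqrt δ ≤ ∑ i, Real.sqrt (p i * q i)) :
    δ * (∑ i, p i / a i)⁻¹ ≤ ∑ i, q i * a i := by
  have hinv : 0 ≤ ∑ i, p i / a i := sum_nonneg fun i _ => div_nonneg (hp0 i) (ha i).le
  have hexp : 0 ≤ ∑ i, q i * a i := sum_nonneg fun i _ => mul_nonneg (hq0 i) (ha i).le
  have hδ : δ ≤ (∑ i, q i * a i) * ∑ i, p i / a i := by
    rw [mul_comm, ← Real.sqrt_le_sqrt_iff (mul_nonneg hinv hexp), Real.sqrt_mul hinv]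
    exact hF.trans (Real.sum_sqrt_mul_le_sqrt_sum_div_mul_sqrt_sum_mul _ ha hp0 hq0)
  rw [← div_eq_mul_inv]
  exact div_le_of_le_mul₀ hinv hexp hδ

/-- Fidelity–expectation bound: if the classical fidelity between `p` and `q`
is at least `√δ`, then `E_q[A] ≥ δ / E_p[A⁻¹]`. -/
theorem expectation_fidelity {ι : Type*} [Fintype ι] (a : ι → ℝ) (ha : ∀ i, 0 < a i)
    (p q : ι → ℝ) (hp0 : ∀ i, 0 ≤ p i) (hq0 : ∀ i, 0 ≤ q i)
    (hp1 : ∑ i, p i = 1) (hq1 : ∑ i, q i = 1)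
    (δ : ℝ) (hδ0 : 0 ≤ δ) (hδ1 : δ ≤ 1)
    (hF : Real.sqrt δ ≤ ∑ i, Real.sqrt (p i * q i)) :
    δ * (∑ i, p i / a i)⁻¹ ≤ ∑ i, q i * a i :=
  expectation_fidelity_general a ha p q hp0 hq0 δ hF
end

section
/- Let 0 < a₀ ≤ ā ≤ a₁ and let A be a random variable with distribution p taking values in a finite set S ⊆ [a₀, a₁]. If E_p[A] = ā, then E_p[A⁻¹] ≤ (a₀ + a₁ − ā)/(a₀ a₁). -/
/-! The function `x ↦ x⁻¹` is convex on `[a₀, a₁]`, so it lies below its secant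
`x ↦ (a₀ + a₁ - x) / (a₀ a₁)` there. Averaging against `p` and using that the secant is affine
bounds `E[A⁻¹]` by the secant evaluated at `E[A] = ā`. -/

open Finset

theorem inv_le_secant_of_mem_Icc {a₀ a₁ x : ℝ} (h0 : 0 < a₀) (hx : x ∈ Set.Icc a₀ a₁) :
    x⁻¹ ≤ (a₀ + a₁ - x) / (a₀ * a₁) := by
  obtain ⟨hlo, hhi⟩ := hx
  have hx0 : 0 < x := h0.trans_le hlo
  have hprod : 0 < a₀ * a₁ := mul_pos h0 (hx0.trans_le hhi)
  rw [inv_eq_one_div, div_le_div_iff₀ hx0 hprod]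
  nlinarith [mul_nonneg (sub_nonneg.2 hlo) (sub_nonneg.2 hhi)]

theorem sum_mul_le_of_le_affine {ι : Type*} (s : Finset ι) {p f a : ι → ℝ} (α β : ℝ)
    (hp0 : ∀ i ∈ s, 0 ≤ p i) (hp1 : ∑ i ∈ s, p i = 1) (hf : ∀ i ∈ s, f i ≤ α + β * a i) :
    ∑ i ∈ s, p i * f i ≤ α + β * ∑ i ∈ s, p i * a i :=
  calc ∑ i ∈ s, p i * f i ≤ ∑ i ∈ s, p i * (α + β * a i) :=
        sum_le_sum fun i hi => mul_le_mul_of_nonneg_left (hf i hi) (hp0 i hi)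
    _ = α * ∑ i ∈ s, p i + β * ∑ i ∈ s, p i * a i := by
        simp only [mul_add, sum_add_distrib, mul_sum]
        congr 1 <;> exact sum_congr rfl fun i _ => by ring
    _ = α + β * ∑ i ∈ s, p i * a i := by rw [hp1, mul_one]

theorem expectation_inv_le_general {ι : Type*} [Fintype ι] (a : ι → ℝ) (p : ι → ℝ)
    (a₀ a₁ abar : ℝ) (h0 : 0 < a₀)
    (hrange : ∀ i, a i ∈ Set.Icc a₀ a₁)
    (hp0 : ∀ i, 0 ≤ p i) (hp1 : ∑ i, p i = 1)
    (hmean : ∑ i, p i * a i = abar) :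
    ∑ i, p i / a i ≤ (a₀ + a₁ - abar) / (a₀ * a₁) := by
  have hsecant : ∀ i ∈ univ, (a i)⁻¹ ≤ (a₀ + a₁) / (a₀ * a₁) + (-(a₀ * a₁)⁻¹) * a i :=
    fun i _ => by
      rw [neg_mul, ← div_eq_inv_mul, ← sub_eq_add_neg, ← sub_div]
      exact inv_le_secant_of_mem_Icc h0 (hrange i)
  calc ∑ i, p i / a i = ∑ i, p i * (a i)⁻¹ := by simp only [div_eq_mul_inv]
    _ ≤ (a₀ + a₁) / (a₀ * a₁) + (-(a₀ * a₁)⁻¹) * abar := by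
        rw [← hmean]
        exact sum_mul_le_of_le_affine univ _ _ (fun i _ => hp0 i) hp1 hsecant
    _ = (a₀ + a₁ - abar) / (a₀ * a₁) := by ring

/-- If a random variable takes values in `[a₀, a₁]` with mean `ā`, then the mean of
its inverse is at most `(a₀ + a₁ − ā)/(a₀ a₁)`. -/
theorem expectation_inv_le {ι : Type*} [Fintype ι] (a : ι → ℝ) (p : ι → ℝ)
    (a₀ a₁ abar : ℝ) (h0 : 0 < a₀) (h01 : a₀ ≤ abar) (h1 : abar ≤ a₁)
    (hrange : ∀ i, a i ∈ Set.Icc a₀ a₁)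
    (hp0 : ∀ i, 0 ≤ p i) (hp1 : ∑ i, p i = 1)
    (hmean : ∑ i, p i * a i = abar) :
    ∑ i, p i / a i ≤ (a₀ + a₁ - abar) / (a₀ * a₁) :=
  expectation_inv_le_general a p a₀ a₁ abar h0 hrange hp0 hp1 hmean
end

section
/- Let Y₁, …, Y_k ∈ {−1, +1} be random variables, −1 ≤ β ≤ 1 and C > 0, such that for every subset S ⊆ [k], E[∏_{i∈S} Y_i] ≤ C·β^{|S|}. Then for any λ with β ≤ λ ≤ 1, Pr[Σ_{i=1}^k Y_i ≥ λk] ≤ C·exp(−k·D(1/2 + λ/2 ‖ 1/2 + β/2)). -/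
/-- Binary relative entropy `D(α‖μ) = α ln(α/μ) + (1−α) ln((1−α)/(1−μ))`,
with the convention `0 · ln 0 = 0` (automatic since `Real.log 0 = 0`). -/
noncomputable def binaryRelEntropy (α μ : ℝ) : ℝ :=
  α * Real.log (α / μ) + (1 - α) * Real.log ((1 - α) / (1 - μ))

/-!
Put `p = (1 + β) / 2`, `q = (1 + λ) / 2` and let `L(y)` be the likelihood ratio of
`Bernoulli q` to `Bernoulli p` at the outcome `y = ±1`. As `L` is affine in `y` with nonnegative
coefficients, expanding `∏ L(Yᵢ)` into parities and applying the hypothesis gives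
`E ∏ L(Yᵢ) ≤ C L(β)^k = C`, since `L` has mean one under `Bernoulli p`. On the event
`∑ Yᵢ ≥ λk` at least `qk` of the `Yᵢ` equal `1`, so there
`∏ L(Yᵢ) ≥ (q/p)^{qk} ((1-q)/(1-p))^{(1-q)k} = e^{k D(q‖p)}`, and Markov's inequality concludes.
For `β = -1` the bound is trivial: `D(q‖0) ≤ 0` while the probability is at most `1 ≤ C`.
-/

open Finset Real

theorem prod_mul_add_eq_sum_powerset {ι R : Type*} [Fintype ι] [DecidableEq ι] [CommSemiring R]
    (a b : R) (z : ι → R) :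
    ∏ i, (b * z i + a) = ∑ S ∈ univ.powerset, b ^ #S * a ^ #(univ \ S) * ∏ i ∈ S, z i := by
  rw [prod_add]
  refine sum_congr rfl fun S _ => ?_
  rw [prod_mul_distrib, prod_const, prod_const]
  ring

theorem sum_mul_prod_mul_add_le {Ω ι : Type*} [Fintype Ω] [Fintype ι] (μ : Ω → ℝ)
    (Y : ι → Ω → ℝ) {a b β C : ℝ} (ha : 0 ≤ a) (hb : 0 ≤ b)
    (hE : ∀ S : Finset ι, ∑ ω, μ ω * ∏ i ∈ S, Y i ω ≤ C * β ^ #S) :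
    ∑ ω, μ ω * ∏ i, (b * Y i ω + a) ≤ C * (b * β + a) ^ Fintype.card ι := by
  classical
  calc ∑ ω, μ ω * ∏ i, (b * Y i ω + a)
      = ∑ S ∈ univ.powerset, b ^ #S * a ^ #(univ \ S) * ∑ ω, μ ω * ∏ i ∈ S, Y i ω := by
        simp_rw [prod_mul_add_eq_sum_powerset, mul_sum]
        rw [sum_comm]
        exact sum_congr rfl fun S _ => sum_congr rfl fun ω _ => by ring
    _ ≤ ∑ S ∈ univ.powerset, b ^ #S * a ^ #(univ \ S) * (C * β ^ #S) := by
        gcongr with S; exact hE S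
    _ = C * (b * β + a) ^ Fintype.card ι := by
        rw [← card_univ, ← prod_const, prod_mul_add_eq_sum_powerset (z := fun _ => β), mul_sum]
        exact sum_congr rfl fun S _ => by rw [prod_const]; ring

theorem sum_ite_mul_le_sum_mul {Ω : Type*} [Fintype Ω] {μ f : Ω → ℝ} {P : Ω → Prop}
    [DecidablePred P] {M : ℝ} (hμ : ∀ ω, 0 ≤ μ ω) (hf : ∀ ω, 0 ≤ f ω)
    (hM : ∀ ω, P ω → M ≤ f ω) :
    (∑ ω, if P ω then μ ω else 0) * M ≤ ∑ ω, μ ω * f ω := by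
  rw [sum_mul]
  refine sum_le_sum fun ω _ => ?_
  split_ifs with h
  · exact mul_le_mul_of_nonneg_left (hM ω h) (hμ ω)
  · rw [zero_mul]; exact mul_nonneg (hμ ω) (hf ω)

theorem eq_one_of_card_le_sum {ι : Type*} [Fintype ι] {y : ι → ℝ} (hy : ∀ i, y i ≤ 1)
    (hsum : (Fintype.card ι : ℝ) ≤ ∑ i, y i) (i : ι) : y i = 1 := by
  have h : ∑ j, y j = ∑ _j : ι, (1 : ℝ) :=
    le_antisymm (sum_le_sum fun j _ => hy j) (by simpa using hsum)
  exact (sum_eq_sum_iff_of_le fun j _ => hy j).1 h i (mem_univ i)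

theorem binaryRelEntropy_zero_right_nonpos {q : ℝ} (hq0 : 0 ≤ q) (hq1 : q ≤ 1) :
    binaryRelEntropy q 0 ≤ 0 := by
  rw [binaryRelEntropy, div_zero, log_zero, mul_zero, zero_add, sub_zero, div_one]
  exact mul_nonpos_of_nonneg_of_nonpos (by linarith) (log_nonpos (by linarith) (by linarith))

/-- The likelihood ratio of `Bernoulli q` to `Bernoulli p` at the outcome `y = 1` (success) or
`y = -1` (failure), extended affinely in `y`. -/
noncomputable def bernoulliRatio (p q y : ℝ) : ℝ :=
  (q / p - (1 - q) / (1 - p)) / 2 * y + (q / p + (1 - q) / (1 - p)) / 2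

section bernoulliRatio

variable {p q : ℝ}

theorem bernoulliRatio_one : bernoulliRatio p q 1 = q / p := by
  unfold bernoulliRatio; ring

theorem bernoulliRatio_neg_one : bernoulliRatio p q (-1) = (1 - q) / (1 - p) := by
  unfold bernoulliRatio; ring

theorem bernoulliRatio_nonneg (hp : 0 ≤ p) (hpq : p ≤ q) (hq : q ≤ 1) {y : ℝ}
    (hy : y = 1 ∨ y = -1) : 0 ≤ bernoulliRatio p q y := by
  rcases hy with rfl | rfl
  · rw [bernoulliRatio_one]; exact div_nonneg (by linarith) hp
  · rw [bernoulliRatio_neg_one]; exact div_nonneg (by linarith) (by linarith)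

theorem div_one_sub_le_div (hp : 0 < p) (hpq : p ≤ q) (hq : q ≤ 1) :
    (1 - q) / (1 - p) ≤ q / p :=
  calc (1 - q) / (1 - p) ≤ 1 := div_le_one_of_le₀ (by linarith) (by linarith)
    _ ≤ q / p := (one_le_div₀ hp).2 hpq

theorem bernoulliRatio_two_mul_sub_one (hp : 0 < p) (hpq : p ≤ q) (hq : q ≤ 1) :
    bernoulliRatio p q (2 * p - 1) = 1 := by
  unfold bernoulliRatio
  rcases hq.eq_or_lt with rfl | hq
  · field_simp; ring
  · have hp1 : 1 - p ≠ 0 := by linarith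
    field_simp; ring

theorem bernoulliRatio_eq_exp (hp : 0 < p) (hpq : p ≤ q) (hq : q < 1) {y : ℝ}
    (hy : y = 1 ∨ y = -1) :
    bernoulliRatio p q y = exp ((log (q / p) - log ((1 - q) / (1 - p))) / 2 * y
      + (log (q / p) + log ((1 - q) / (1 - p))) / 2) := by
  have hu : 0 < q / p := div_pos (by linarith) hp
  have hv : 0 < (1 - q) / (1 - p) := div_pos (by linarith) (by linarith)
  rcases hy with rfl | rfl
  · conv_lhs => rw [bernoulliRatio_one, ← exp_log hu]
    ring_nf
  · conv_lhs => rw [bernoulliRatio_neg_one, ← exp_log hv]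
    ring_nf

theorem exp_mul_binaryRelEntropy_le_prod_bernoulliRatio {ι : Type*} [Fintype ι]
    (hp : 0 < p) (hpq : p ≤ q) (hq : q ≤ 1) {y : ι → ℝ} (hy : ∀ i, y i = 1 ∨ y i = -1)
    (hsum : (2 * q - 1) * Fintype.card ι ≤ ∑ i, y i) :
    exp (Fintype.card ι * binaryRelEntropy q p) ≤ ∏ i, bernoulliRatio p q (y i) := by
  rcases hq.eq_or_lt with rfl | hq
  · have hy1 : ∀ i, y i = 1 :=
      eq_one_of_card_le_sum (fun i => by rcases hy i with h | h <;> linarith) (by linarith)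
    simp only [hy1, bernoulliRatio_one, prod_const, card_univ, binaryRelEntropy]
    rw [← exp_log (div_pos one_pos hp), ← exp_nat_mul]
    simp
  · set A := log (q / p)
    set B := log ((1 - q) / (1 - p))
    have hBA : B ≤ A := log_le_log (div_pos (by linarith) (by linarith))
      (div_one_sub_le_div hp hpq hq.le)
    rw [prod_congr rfl fun i _ => bernoulliRatio_eq_exp hp hpq hq (hy i), ← exp_sum,
      sum_add_distrib, ← mul_sum, sum_const, card_univ, nsmul_eq_mul]
    gcongr
    unfold binaryRelEntropy
    nlinarith

end bernoulliRatio

theorem sum_ite_mul_exp_binaryRelEntropy_le {Ω ι : Type*} [Fintype Ω] [Fintype ι]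
    {μ : Ω → ℝ} (hμ : ∀ ω, 0 ≤ μ ω) {Y : ι → Ω → ℝ} (hY : ∀ i ω, Y i ω = 1 ∨ Y i ω = -1)
    {p q C : ℝ} (hp : 0 < p) (hpq : p ≤ q) (hq : q ≤ 1)
    (hE : ∀ S : Finset ι, ∑ ω, μ ω * ∏ i ∈ S, Y i ω ≤ C * (2 * p - 1) ^ #S) :
    (∑ ω, if (2 * q - 1) * Fintype.card ι ≤ ∑ i, Y i ω then μ ω else 0) *
      exp (Fintype.card ι * binaryRelEntropy q p) ≤ C :=
  calc _ ≤ ∑ ω, μ ω * ∏ i, bernoulliRatio p q (Y i ω) :=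
        sum_ite_mul_le_sum_mul hμ
          (fun ω => prod_nonneg fun i _ => bernoulliRatio_nonneg hp.le hpq hq (hY i ω))
          fun ω hω => exp_mul_binaryRelEntropy_le_prod_bernoulliRatio hp hpq hq (hY · ω) hω
    _ ≤ C * bernoulliRatio p q (2 * p - 1) ^ Fintype.card ι :=
        sum_mul_prod_mul_add_le μ Y
          (div_nonneg (add_nonneg (div_nonneg (by linarith) hp.le)
            (div_nonneg (by linarith) (by linarith))) zero_le_two)
          (div_nonneg (sub_nonneg.2 (div_one_sub_le_div hp hpq hq)) zero_le_two) hE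
    _ = C := by rw [bernoulliRatio_two_mul_sub_one hp hpq hq, one_pow, mul_one]

theorem threshold_lemma_general {Ω : Type*} [Fintype Ω] (μ : Ω → ℝ)
    (hμ0 : ∀ ω, 0 ≤ μ ω) (hμ1 : ∑ ω, μ ω = 1)
    (k : ℕ) (Y : Fin k → Ω → ℝ) (hY : ∀ i ω, Y i ω = 1 ∨ Y i ω = -1)
    (β : ℝ) (hβ : -1 ≤ β ∧ β ≤ 1) (C : ℝ)
    (hE : ∀ S : Finset (Fin k), ∑ ω, μ ω * ∏ i ∈ S, Y i ω ≤ C * β ^ S.card)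
    (lam : ℝ) (hlam : β ≤ lam ∧ lam ≤ 1) :
    (∑ ω, if lam * k ≤ ∑ i, Y i ω then μ ω else 0) ≤
      C * Real.exp (-(k : ℝ) * binaryRelEntropy (1 / 2 + lam / 2) (1 / 2 + β / 2)) := by
  rcases hβ.1.eq_or_lt with rfl | hβ
  · have hC : 1 ≤ C := by simpa [hμ1] using hE ∅
    have hprob : (∑ ω, if lam * k ≤ ∑ i, Y i ω then μ ω else 0) ≤ 1 :=
      hμ1 ▸ sum_le_sum fun ω _ => by split_ifs <;> simp [hμ0 ω]
    have hD := binaryRelEntropy_zero_right_nonpos (q := 1 / 2 + lam / 2) (by linarith)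
      (by linarith)
    rw [show (1 : ℝ) / 2 + -1 / 2 = 0 by norm_num]
    calc _ ≤ 1 := hprob
      _ ≤ C := hC
      _ ≤ _ := le_mul_of_one_le_right (by linarith) (one_le_exp (by nlinarith))
  have key := sum_ite_mul_exp_binaryRelEntropy_le hμ0 hY (p := 1 / 2 + β / 2)
    (q := 1 / 2 + lam / 2) (by linarith) (by linarith) (by linarith)
    fun S => by rw [show 2 * (1 / 2 + β / 2) - 1 = β by ring]; exact hE S
  rw [show 2 * (1 / 2 + lam / 2) - 1 = lam by ring, Fintype.card_fin] at key
  rwa [neg_mul, exp_neg, ← div_eq_mul_inv, le_div_iff₀ (exp_pos _)]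

/-- Unger's threshold lemma: if all parities of subsets of the `±1`-valued random
variables `Y i` have expectation at most `C β^{|S|}`, then the probability that their
sum is at least `λ k` is at most `C e^{−k D(1/2+λ/2 ‖ 1/2+β/2)}`. -/
theorem threshold_lemma {Ω : Type*} [Fintype Ω] (μ : Ω → ℝ)
    (hμ0 : ∀ ω, 0 ≤ μ ω) (hμ1 : ∑ ω, μ ω = 1)
    (k : ℕ) (Y : Fin k → Ω → ℝ) (hY : ∀ i ω, Y i ω = 1 ∨ Y i ω = -1)
    (β : ℝ) (hβ : -1 ≤ β ∧ β ≤ 1) (C : ℝ) (hC : 0 < C)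
    (hE : ∀ S : Finset (Fin k), ∑ ω, μ ω * ∏ i ∈ S, Y i ω ≤ C * β ^ S.card)
    (lam : ℝ) (hlam : β ≤ lam ∧ lam ≤ 1) :
    (∑ ω, if lam * k ≤ ∑ i, Y i ω then μ ω else 0) ≤
      C * Real.exp (-(k : ℝ) * binaryRelEntropy (1 / 2 + lam / 2) (1 / 2 + β / 2)) :=
  threshold_lemma_general μ hμ0 hμ1 k Y hY β hβ C hE lam hlam
end

section
/- Let D(A) be a diagonal matrix with positive diagonal entries a_1, …, a_m, let u be a unit vector with entries √p_i for a probability distribution p, and let 0 ≤ δ ≤ 1. Then the minimum of Tr(D(A)ρ) over density matrices ρ ⪰ 0 with Tr(ρ) = 1 and Tr(|u⟩⟨u| ρ) ≥ δ is at least δ / (Σ_i p_i/a_i). -/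
open Matrix Finset
open scoped ComplexOrder

/-!
Write `ρ` as the Gram matrix of vectors `vᵢ`. Then `Tr(|u⟩⟨u|ρ) = ‖∑ √pᵢ vᵢ‖²` and
`Tr(D(A)ρ) = ∑ aᵢ ‖vᵢ‖²`, and the triangle inequality followed by the Cauchy–Schwarz inequality
for `√pᵢ/√aᵢ` and `√aᵢ ‖vᵢ‖` gives `‖∑ √pᵢ vᵢ‖² ≤ (∑ pᵢ/aᵢ) (∑ aᵢ ‖vᵢ‖²)`.
-/

theorem Finset.norm_sum_smul_sq_le {ι 𝕜 E : Type*} [NormedField 𝕜] [SeminormedAddCommGroup E]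
    [NormedSpace 𝕜 E] (s : Finset ι) (x : ι → 𝕜) (v : ι → E) {a : ι → ℝ}
    (ha : ∀ i ∈ s, 0 < a i) :
    ‖∑ i ∈ s, x i • v i‖ ^ 2 ≤ (∑ i ∈ s, ‖x i‖ ^ 2 / a i) * ∑ i ∈ s, a i * ‖v i‖ ^ 2 := by
  have htriangle : ‖∑ i ∈ s, x i • v i‖ ≤ ∑ i ∈ s, ‖x i‖ * ‖v i‖ :=
    (norm_sum_le _ _).trans_eq (by simp_rw [norm_smul])
  calc ‖∑ i ∈ s, x i • v i‖ ^ 2 ≤ (∑ i ∈ s, ‖x i‖ * ‖v i‖) ^ 2 := by gcongr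
    _ ≤ _ := sum_sq_le_sum_mul_sum_of_sq_le_mul s
        (fun i hi => div_nonneg (sq_nonneg _) (ha i hi).le)
        (fun i hi => mul_nonneg (ha i hi).le (sq_nonneg _))
        (fun i hi => by field_simp [(ha i hi).ne']; rfl)

theorem Matrix.PosSemidef.exists_eq_gram {ι 𝕜 : Type*} [Fintype ι] [RCLike 𝕜]
    {ρ : Matrix ι ι 𝕜} (hρ : ρ.PosSemidef) : ∃ v : ι → EuclideanSpace 𝕜 ι, ρ = gram 𝕜 v := by
  classical
  open MatrixOrder in
  obtain ⟨B, rfl⟩ := CStarAlgebra.nonneg_iff_eq_star_mul_self.mp hρ.nonneg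
  refine ⟨fun i => WithLp.toLp 2 fun k => B k i, ?_⟩
  ext i j
  simp [gram_apply, mul_apply, PiLp.inner_apply, mul_comm]

theorem Matrix.trace_vecMulVec_mul {ι R : Type*} [Fintype ι] [CommSemiring R]
    (x y : ι → R) (A : Matrix ι ι R) : trace (vecMulVec x y * A) = y ⬝ᵥ A *ᵥ x := by
  rw [vecMulVec_mul, trace_vecMulVec, dotProduct_comm, dotProduct_mulVec]

theorem Matrix.re_trace_diagonal_mul_gram {ι 𝕜 E : Type*} [Fintype ι] [DecidableEq ι] [RCLike 𝕜]
    [SeminormedAddCommGroup E] [InnerProductSpace 𝕜 E] (a : ι → ℝ) (v : ι → E) :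
    RCLike.re (trace (diagonal (fun i => (a i : 𝕜)) * gram 𝕜 v)) = ∑ i, a i * ‖v i‖ ^ 2 := by
  simp [trace, diagonal_mul, gram_apply, inner_self_eq_norm_sq_to_K]

theorem Matrix.PosSemidef.re_star_dotProduct_mulVec_le {ι 𝕜 : Type*} [Fintype ι] [DecidableEq ι]
    [RCLike 𝕜] {ρ : Matrix ι ι 𝕜} (hρ : ρ.PosSemidef) (x : ι → 𝕜) {a : ι → ℝ}
    (ha : ∀ i, 0 < a i) :
    RCLike.re (star x ⬝ᵥ ρ *ᵥ x) ≤
      (∑ i, ‖x i‖ ^ 2 / a i) * RCLike.re (trace (diagonal (fun i => (a i : 𝕜)) * ρ)) := by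
  obtain ⟨v, rfl⟩ := hρ.exists_eq_gram
  rw [star_dotProduct_gram_mulVec, inner_self_eq_norm_sq, re_trace_diagonal_mul_gram]
  exact norm_sum_smul_sq_le _ x v fun i _ => ha i

theorem sdp_diag_lower_bound_general {ι : Type*} [Fintype ι] [DecidableEq ι]
    (a : ι → ℝ) (ha : ∀ i, 0 < a i)
    (p : ι → ℝ) (hp0 : ∀ i, 0 ≤ p i) (hp1 : ∑ i, p i = 1)
    (δ : ℝ)
    (ρ : Matrix ι ι ℂ) (hρ : ρ.PosSemidef)
    (hover : δ ≤ (Matrix.trace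
      ((Matrix.of fun i j => ((Real.sqrt (p i) * Real.sqrt (p j) : ℝ) : ℂ)) * ρ)).re) :
    δ / (∑ i, p i / a i) ≤
      (Matrix.trace (Matrix.diagonal (fun i => ((a i : ℝ) : ℂ)) * ρ)).re := by
  set u : ι → ℂ := fun i => (Real.sqrt (p i) : ℂ)
  have hu : (Matrix.of fun i j => ((Real.sqrt (p i) * Real.sqrt (p j) : ℝ) : ℂ)) =
      vecMulVec u (star u) := by
    ext i j
    simp [u, vecMulVec_apply]
  have hnorm : ∑ i, ‖u i‖ ^ 2 / a i = ∑ i, p i / a i := by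
    simp [u, Real.sq_sqrt (hp0 _)]
  obtain ⟨i, -, hi⟩ := exists_lt_of_sum_lt (by simp [hp1] : ∑ _ : ι, (0 : ℝ) < ∑ i, p i)
  have hpos : 0 < ∑ i, p i / a i :=
    sum_pos' (fun j _ => div_nonneg (hp0 j) (ha j).le) ⟨i, mem_univ i, div_pos hi (ha i)⟩
  rw [hu, trace_vecMulVec_mul] at hover
  rw [div_le_iff₀' hpos, ← hnorm]
  exact hover.trans (hρ.re_star_dotProduct_mulVec_le u ha)

/-- SDP lower bound: the minimum of `Tr(D(A)ρ)` over density matrices `ρ` with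
`Tr(|u⟩⟨u|ρ) ≥ δ`, where `u` has entries `√p_i`, is at least `δ / Σ_i p_i/a_i`. -/
theorem sdp_diag_lower_bound {ι : Type*} [Fintype ι] [DecidableEq ι]
    (a : ι → ℝ) (ha : ∀ i, 0 < a i)
    (p : ι → ℝ) (hp0 : ∀ i, 0 ≤ p i) (hp1 : ∑ i, p i = 1)
    (δ : ℝ) (hδ0 : 0 ≤ δ) (hδ1 : δ ≤ 1)
    (ρ : Matrix ι ι ℂ) (hρ : ρ.PosSemidef) (hρtr : ρ.trace = 1)
    (hover : δ ≤ (Matrix.trace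
      ((Matrix.of fun i j => ((Real.sqrt (p i) * Real.sqrt (p j) : ℝ) : ℂ)) * ρ)).re) :
    δ / (∑ i, p i / a i) ≤
      (Matrix.trace (Matrix.diagonal (fun i => ((a i : ℝ) : ℂ)) * ρ)).re :=
  sdp_diag_lower_bound_general a ha p hp0 hp1 δ ρ hρ hover
end

section
/- Let ρ and σ be positive semidefinite n×n matrices with factorizations ρ = A*A and σ = B*B. Then the trace norm ‖A B*‖₁ equals ‖ρ^{1/2} σ^{1/2}‖₁; in particular the quantity F(ρ,σ) = ‖ρ^{1/2}σ^{1/2}‖₁ is independent of the chosen factorization. -/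
/-!
`‖X‖₁` depends only on the Gram matrix `Xᴴ X`, and `‖Xᴴ‖₁ = ‖X‖₁`: `Xᴴ X` and `X Xᴴ` have the
same traces of all positive powers, i.e. the same power sums of eigenvalues, and interpolating
`√` at the eigenvalues and at `0` by a polynomial, which then has no constant term, shows that
the sums of the square roots of the eigenvalues agree.  Replacing factors by Gram-equivalent
ones and taking adjoints gives
`‖A Bᴴ‖₁ = ‖ρ^{1/2} Bᴴ‖₁ = ‖B ρ^{1/2}‖₁ = ‖σ^{1/2} ρ^{1/2}‖₁ = ‖ρ^{1/2} σ^{1/2}‖₁`.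
-/

open Matrix
open scoped ComplexOrder
open Classical

/-- The old Mathlib `Matrix.PosSemidef.sqrt` (removed from Mathlib), spelled out. -/
noncomputable def posSemidefSqrt {n : Type*} [Fintype n] [DecidableEq n] {A : Matrix n n ℂ}
    (hA : A.PosSemidef) : Matrix n n ℂ :=
  (hA.1.eigenvectorUnitary : Matrix n n ℂ) * diagonal (fun i => ((Real.sqrt (hA.1.eigenvalues i) : ℝ) : ℂ)) *
    (star hA.1.eigenvectorUnitary : Matrix n n ℂ)

/-- Trace norm `‖X‖₁ = Tr √(Xᴴ X)`. -/
noncomputable def traceNorm {m n : Type*} [Fintype m] [Fintype n] [DecidableEq n]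
    (X : Matrix m n ℂ) : ℝ :=
  ((posSemidefSqrt (Matrix.posSemidef_conjTranspose_mul_self X)).trace).re

/-- The positive semidefinite square root (junk value `0` otherwise). -/
noncomputable def matSqrt {n : Type*} [Fintype n] [DecidableEq n] (A : Matrix n n ℂ) :
    Matrix n n ℂ :=
  if h : A.PosSemidef then posSemidefSqrt h else 0

open Unitary

theorem Finset.sum_comp_eq_of_sum_pow_eq {K ι κ : Type*} [Field K] [Fintype ι] [Fintype κ]
    (φ : K → K) (hφ : φ 0 = 0) (f : ι → K) (g : κ → K)
    (h : ∀ k ≠ 0, ∑ i, f i ^ k = ∑ j, g j ^ k) :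
    ∑ i, φ (f i) = ∑ j, φ (g j) := by
  classical
  set S : Finset K := insert 0 (Finset.univ.image f ∪ Finset.univ.image g)
  set p : Polynomial K := Lagrange.interpolate S id φ
  have hp : ∀ x ∈ S, p.eval x = φ x := fun x hx =>
    Lagrange.eval_interpolate_at_node φ Function.injective_id.injOn hx
  have hp0 : p.coeff 0 = 0 := by
    rw [Polynomial.coeff_zero_eq_eval_zero, hp 0 (Finset.mem_insert_self _ _), hφ]
  calc ∑ i, φ (f i) = ∑ i, p.eval (f i) :=
        Finset.sum_congr rfl fun i _ => (hp _ (by simp [S])).symm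
    _ = ∑ k ∈ Finset.range (p.natDegree + 1), p.coeff k * ∑ i, f i ^ k := by
        simp_rw [Polynomial.eval_eq_sum_range, Finset.mul_sum]
        exact Finset.sum_comm
    _ = ∑ k ∈ Finset.range (p.natDegree + 1), p.coeff k * ∑ j, g j ^ k := by
        refine Finset.sum_congr rfl fun k _ => ?_
        rcases eq_or_ne k 0 with rfl | hk
        · rw [hp0, zero_mul, zero_mul]
        · rw [h k hk]
    _ = ∑ j, p.eval (g j) := by
        simp_rw [Polynomial.eval_eq_sum_range, Finset.mul_sum]
        exact Finset.sum_comm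
    _ = ∑ j, φ (g j) := Finset.sum_congr rfl fun j _ => hp _ (by simp [S])

theorem Matrix.trace_pow_mul_comm {m n R : Type*} [Fintype m] [Fintype n] [DecidableEq m]
    [DecidableEq n] [CommSemiring R] (X : Matrix m n R) (Y : Matrix n m R) {k : ℕ} (hk : k ≠ 0) :
    ((X * Y) ^ k).trace = ((Y * X) ^ k).trace := by
  obtain ⟨j, rfl⟩ := Nat.exists_eq_succ_of_ne_zero hk
  have pow_succ_eq : ∀ l : ℕ, (X * Y) ^ (l + 1) = X * ((Y * X) ^ l * Y) := by
    intro l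
    induction l with
    | zero => simp
    | succ l ih => rw [pow_succ, ih, pow_succ]; simp only [Matrix.mul_assoc]
  rw [pow_succ_eq, trace_mul_comm, Matrix.mul_assoc, ← pow_succ]

section

variable {n : Type*} [Fintype n] [DecidableEq n]

theorem Matrix.trace_conjStarAlgAut {R : Type*} [CommRing R] [StarRing R]
    (U : unitaryGroup n R) (X : Matrix n n R) :
    (conjStarAlgAut R _ U X).trace = X.trace := by
  rw [conjStarAlgAut_apply, trace_mul_cycle, coe_star_mul_self, Matrix.one_mul]

theorem Matrix.IsHermitian.trace_pow {𝕜 : Type*} [RCLike 𝕜] {A : Matrix n n 𝕜}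
    (hA : A.IsHermitian) (k : ℕ) : (A ^ k).trace = ∑ i, (hA.eigenvalues i : 𝕜) ^ k := by
  conv_lhs => rw [hA.spectral_theorem, ← map_pow, trace_conjStarAlgAut, diagonal_pow]
  simp [trace_diagonal]

theorem posSemidefSqrt_eq_conjStarAlgAut {A : Matrix n n ℂ} (hA : A.PosSemidef) :
    posSemidefSqrt hA = conjStarAlgAut ℂ _ hA.1.eigenvectorUnitary
      (diagonal fun i => ((√(hA.1.eigenvalues i) : ℝ) : ℂ)) :=
  rfl

theorem posSemidefSqrt_mul_self {A : Matrix n n ℂ} (hA : A.PosSemidef) :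
    posSemidefSqrt hA * posSemidefSqrt hA = A := by
  conv_rhs => rw [hA.1.spectral_theorem]
  rw [posSemidefSqrt_eq_conjStarAlgAut, ← map_mul, diagonal_mul_diagonal]
  congr 2
  funext i
  simp [← Complex.ofReal_mul, Real.mul_self_sqrt (hA.eigenvalues_nonneg i)]

theorem isHermitian_posSemidefSqrt {A : Matrix n n ℂ} (hA : A.PosSemidef) :
    (posSemidefSqrt hA).IsHermitian := by
  rw [IsHermitian, ← star_eq_conjTranspose, posSemidefSqrt_eq_conjStarAlgAut, ← map_star,
    star_eq_conjTranspose, diagonal_conjTranspose, Pi.star_def]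
  simp only [Complex.star_def, Complex.conj_ofReal]

theorem conjTranspose_posSemidefSqrt_mul_self {A : Matrix n n ℂ} (hA : A.PosSemidef) :
    (posSemidefSqrt hA)ᴴ * posSemidefSqrt hA = A := by
  rw [(isHermitian_posSemidefSqrt hA).eq, posSemidefSqrt_mul_self]

theorem re_trace_posSemidefSqrt {A : Matrix n n ℂ} (hA : A.PosSemidef) :
    (posSemidefSqrt hA).trace.re = ∑ i, √(hA.1.eigenvalues i) := by
  rw [posSemidefSqrt_eq_conjStarAlgAut, trace_conjStarAlgAut, trace_diagonal]
  simp

theorem re_trace_posSemidefSqrt_eq_of_trace_pow_eq {p : Type*} [Fintype p] [DecidableEq p]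
    {A : Matrix n n ℂ} {B : Matrix p p ℂ} (hA : A.PosSemidef) (hB : B.PosSemidef)
    (h : ∀ k ≠ 0, (A ^ k).trace = (B ^ k).trace) :
    (posSemidefSqrt hA).trace.re = (posSemidefSqrt hB).trace.re := by
  rw [re_trace_posSemidefSqrt, re_trace_posSemidefSqrt]
  refine Finset.sum_comp_eq_of_sum_pow_eq _ Real.sqrt_zero _ _ fun k hk => ?_
  exact_mod_cast hA.1.trace_pow k ▸ hB.1.trace_pow k ▸ h k hk

end

section

variable {m n p : Type*} [Fintype m] [Fintype n] [Fintype p]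

theorem traceNorm_congr [DecidableEq n] {X : Matrix m n ℂ} {Y : Matrix p n ℂ}
    (h : Xᴴ * X = Yᴴ * Y) : traceNorm X = traceNorm Y := by
  rw [traceNorm, traceNorm]
  congr 3

theorem traceNorm_mul_congr {q : Type*} [Fintype q] [DecidableEq q] {X : Matrix m n ℂ}
    {X' : Matrix p n ℂ} (h : Xᴴ * X = X'ᴴ * X') (C : Matrix n q ℂ) :
    traceNorm (X * C) = traceNorm (X' * C) :=
  traceNorm_congr <| by
    rw [conjTranspose_mul, conjTranspose_mul, Matrix.mul_assoc, Matrix.mul_assoc,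
      ← Matrix.mul_assoc Xᴴ, ← Matrix.mul_assoc X'ᴴ, h]

theorem traceNorm_conjTranspose [DecidableEq m] [DecidableEq n] (X : Matrix m n ℂ) :
    traceNorm Xᴴ = traceNorm X :=
  re_trace_posSemidefSqrt_eq_of_trace_pow_eq _ _ fun k hk => by
    rw [conjTranspose_conjTranspose, trace_pow_mul_comm X Xᴴ hk]

theorem traceNorm_mul_conjTranspose_congr {q r : Type*} [Fintype q] [Fintype r] [DecidableEq p]
    [DecidableEq q] [DecidableEq r] {A : Matrix m n ℂ} {A' : Matrix p n ℂ} {B : Matrix q n ℂ}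
    {B' : Matrix r n ℂ} (hA : Aᴴ * A = A'ᴴ * A') (hB : Bᴴ * B = B'ᴴ * B') :
    traceNorm (A * Bᴴ) = traceNorm (A' * B'ᴴ) := by
  calc traceNorm (A * Bᴴ) = traceNorm (A' * Bᴴ) := traceNorm_mul_congr hA _
    _ = traceNorm (B * A'ᴴ) := by
        rw [← traceNorm_conjTranspose, conjTranspose_mul, conjTranspose_conjTranspose]
    _ = traceNorm (B' * A'ᴴ) := traceNorm_mul_congr hB _
    _ = traceNorm (A' * B'ᴴ) := by
        rw [← traceNorm_conjTranspose, conjTranspose_mul, conjTranspose_conjTranspose]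

end

/-- `‖A Bᴴ‖₁ = ‖ρ^{1/2} σ^{1/2}‖₁` whenever `ρ = AᴴA` and `σ = BᴴB`: the fidelity
`F(ρ,σ) = ‖ρ^{1/2}σ^{1/2}‖₁` is independent of the factorization. -/
theorem traceNorm_factorization_independent {m m' n : Type*}
    [Fintype m] [Fintype m'] [Fintype n] [DecidableEq m'] [DecidableEq n]
    (A : Matrix m n ℂ) (B : Matrix m' n ℂ) (ρ σ : Matrix n n ℂ)
    (hρ : ρ = Aᴴ * A) (hσ : σ = Bᴴ * B) :
    traceNorm (A * Bᴴ) = traceNorm (matSqrt ρ * matSqrt σ) := by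
  subst hρ hσ
  have hρ := posSemidef_conjTranspose_mul_self A
  have hσ := posSemidef_conjTranspose_mul_self B
  rw [matSqrt, dif_pos hρ, matSqrt, dif_pos hσ]
  conv_rhs => rw [← (isHermitian_posSemidefSqrt hσ).eq]
  exact traceNorm_mul_conjTranspose_congr (conjTranspose_posSemidefSqrt_mul_self hρ).symm
    (conjTranspose_posSemidefSqrt_mul_self hσ).symm
end
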